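/- arXiv:1510.03970 — 4 statements merged into one kernel-verified Lean document; each statement's English description precedes it below -/
import Mathlib

section
/- Let τ > 0, c₀ ∈ ℝ, and let d_w, d_β ≥ 1 be integers. For i = 0, 1 let mᵢ : ℝ → ℝ be continuously differentiable and injective with mᵢ(0) = c₀; let wᵢ : [0, τ] → ℝ^{d_w} be continuously differentiable with every component of wᵢ(t) strictly positive and ‖wᵢ(t)‖₁ = 1 for every t ∈ [0, τ]; and let βᵢ ∈ ℝ^{d_β}. If m₁(w₁(t)ᵀz) + β₁ᵀx = m₀(w₀(t)ᵀz) + β₀ᵀx for every z ∈ ℝ^{d_w}, every x ∈ ℝ^{d_β}, and every t ∈ [0, τ], then β₁ = β₀, w₁(t) = w₀(t) for all t ∈ [0, τ], and m₁(u) = m₀(u) for all u ∈ ℝ. -/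
open Matrix

open Set

/-- Proposition 1 (deterministic form): identifiability of the generalized
partially linear functional single index model. -/
theorem identifiability_partially_linear_functional_single_index
    (τ : ℝ) (hτ : 0 < τ) (c₀ : ℝ) (dw dβ : ℕ) (hdw : 1 ≤ dw) (hdβ : 1 ≤ dβ)
    (m₀ m₁ : ℝ → ℝ)
    (hm₀C : ContDiff ℝ 1 m₀) (hm₁C : ContDiff ℝ 1 m₁)
    (hm₀inj : Function.Injective m₀) (hm₁inj : Function.Injective m₁)
    (hm₀0 : m₀ 0 = c₀) (hm₁0 : m₁ 0 = c₀)
    (w₀ w₁ : ℝ → Fin dw → ℝ)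
    (hw₀C : ContDiffOn ℝ 1 w₀ (Icc 0 τ)) (hw₁C : ContDiffOn ℝ 1 w₁ (Icc 0 τ))
    (hw₀pos : ∀ t ∈ Icc (0:ℝ) τ, ∀ j, 0 < w₀ t j)
    (hw₁pos : ∀ t ∈ Icc (0:ℝ) τ, ∀ j, 0 < w₁ t j)
    (hw₀norm : ∀ t ∈ Icc (0:ℝ) τ, ∑ j, |w₀ t j| = 1)
    (hw₁norm : ∀ t ∈ Icc (0:ℝ) τ, ∑ j, |w₁ t j| = 1)
    (β₀ β₁ : Fin dβ → ℝ)
    (heq : ∀ z : Fin dw → ℝ, ∀ x : Fin dβ → ℝ, ∀ t ∈ Icc (0:ℝ) τ,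
      m₁ (w₁ t ⬝ᵥ z) + β₁ ⬝ᵥ x = m₀ (w₀ t ⬝ᵥ z) + β₀ ⬝ᵥ x) :
    β₁ = β₀ ∧ (∀ t ∈ Icc (0:ℝ) τ, w₁ t = w₀ t) ∧ (∀ u : ℝ, m₁ u = m₀ u) := by
  have h0t : (0:ℝ) ∈ Icc (0:ℝ) τ := ⟨le_refl _, hτ.le⟩
  -- sums of components equal 1
  have hsum₀ : ∀ t ∈ Icc (0:ℝ) τ, ∑ j, w₀ t j = 1 := by
    intro t ht
    rw [← hw₀norm t ht]
    exact Finset.sum_congr rfl fun j _ => (abs_of_pos (hw₀pos t ht j)).symm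
  have hsum₁ : ∀ t ∈ Icc (0:ℝ) τ, ∑ j, w₁ t j = 1 := by
    intro t ht
    rw [← hw₁norm t ht]
    exact Finset.sum_congr rfl fun j _ => (abs_of_pos (hw₁pos t ht j)).symm
  -- β₁ = β₀
  have hβ : β₁ = β₀ := by
    funext i
    have h := heq 0 (Pi.single i 1) 0 h0t
    simp only [dotProduct_zero, hm₀0, hm₁0] at h
    have h' : β₁ ⬝ᵥ Pi.single i 1 = β₀ ⬝ᵥ Pi.single i 1 := by linarith
    simpa [dotProduct, Pi.single_apply, Finset.sum_ite_eq', mul_ite] using h'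
  -- m equation with x = 0
  have hm : ∀ (z : Fin dw → ℝ), ∀ t ∈ Icc (0:ℝ) τ,
      m₁ (w₁ t ⬝ᵥ z) = m₀ (w₀ t ⬝ᵥ z) := by
    intro z t ht
    have h := heq z 0 t ht
    simpa using h
  -- w₁ = w₀
  have hw : ∀ t ∈ Icc (0:ℝ) τ, w₁ t = w₀ t := by
    intro t ht
    have key : ∀ z z' : Fin dw → ℝ, w₀ t ⬝ᵥ z = w₀ t ⬝ᵥ z' →
        w₁ t ⬝ᵥ z = w₁ t ⬝ᵥ z' := by
      intro z z' h
      apply hm₁inj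
      rw [hm z t ht, hm z' t ht, h]
    funext j
    have hjk : ∀ k, w₁ t j * w₀ t k = w₁ t k * w₀ t j := by
      intro k
      have hz : w₀ t ⬝ᵥ (fun i => if i = j then w₀ t k else 0)
          = w₀ t ⬝ᵥ (fun i => if i = k then w₀ t j else 0) := by
        simp [dotProduct, Finset.sum_ite_eq', mul_comm]
      have := key _ _ hz
      simp [dotProduct, Finset.sum_ite_eq', mul_comm] at this
      linarith
    have hsumeq : ∑ k, w₁ t j * w₀ t k = ∑ k, w₁ t k * w₀ t j :=
      Finset.sum_congr rfl fun k _ => hjk k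
    rw [← Finset.mul_sum, ← Finset.sum_mul, hsum₀ t ht, hsum₁ t ht] at hsumeq
    linarith
  refine ⟨hβ, hw, ?_⟩
  intro u
  have h := hm (fun _ => u) 0 h0t
  have hd₀ : w₀ 0 ⬝ᵥ (fun _ => u) = u := by
    simp only [dotProduct]
    rw [← Finset.sum_mul, hsum₀ 0 h0t, one_mul]
  have hd₁ : w₁ 0 ⬝ᵥ (fun _ => u) = u := by
    simp only [dotProduct]
    rw [← Finset.sum_mul, hsum₁ 0 h0t, one_mul]
  rwa [hd₀, hd₁] at h
end

section
/- Let τ > 0, c₀ ∈ ℝ, and let d_w, d_β ≥ 1 be integers. Let H : ℝ → ℝ be strictly monotone. For i = 0, 1 let mᵢ : ℝ → ℝ be continuously differentiable and injective with mᵢ(0) = c₀; let wᵢ : [0, τ] → ℝ^{d_w} be continuously differentiable with every component of wᵢ(t) strictly positive and ‖wᵢ(t)‖₁ = 1 for every t ∈ [0, τ]; and let βᵢ ∈ ℝ^{d_β}. If H(m₁(w₁(t)ᵀz) + β₁ᵀx) = H(m₀(w₀(t)ᵀz) + β₀ᵀx) for every z ∈ ℝ^{d_w}, every x ∈ ℝ^{d_β},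 and every t ∈ [0, τ], then β₁ = β₀, w₁(t) = w₀(t) for all t ∈ [0, τ], and m₁(u) = m₀(u) for all u ∈ ℝ. -/
open Matrix

open Set

/-- Proposition 1 (model level): identifiability of the marginal mean model
`E(D | X, Z, T) = H[m{w(T)ᵀZ} + βᵀX]` with a strictly monotone link `H`. -/
theorem identifiability_with_strictly_monotone_link
    (τ : ℝ) (hτ : 0 < τ) (c₀ : ℝ) (dw dβ : ℕ) (hdw : 1 ≤ dw) (hdβ : 1 ≤ dβ)
    (H : ℝ → ℝ) (hH : StrictMono H ∨ StrictAnti H)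
    (m₀ m₁ : ℝ → ℝ)
    (hm₀C : ContDiff ℝ 1 m₀) (hm₁C : ContDiff ℝ 1 m₁)
    (hm₀inj : Function.Injective m₀) (hm₁inj : Function.Injective m₁)
    (hm₀0 : m₀ 0 = c₀) (hm₁0 : m₁ 0 = c₀)
    (w₀ w₁ : ℝ → Fin dw → ℝ)
    (hw₀C : ContDiffOn ℝ 1 w₀ (Icc 0 τ)) (hw₁C : ContDiffOn ℝ 1 w₁ (Icc 0 τ))
    (hw₀pos : ∀ t ∈ Icc (0:ℝ) τ, ∀ j, 0 < w₀ t j)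
    (hw₁pos : ∀ t ∈ Icc (0:ℝ) τ, ∀ j, 0 < w₁ t j)
    (hw₀norm : ∀ t ∈ Icc (0:ℝ) τ, ∑ j, |w₀ t j| = 1)
    (hw₁norm : ∀ t ∈ Icc (0:ℝ) τ, ∑ j, |w₁ t j| = 1)
    (β₀ β₁ : Fin dβ → ℝ)
    (heq : ∀ z : Fin dw → ℝ, ∀ x : Fin dβ → ℝ, ∀ t ∈ Icc (0:ℝ) τ,
      H (m₁ (w₁ t ⬝ᵥ z) + β₁ ⬝ᵥ x) = H (m₀ (w₀ t ⬝ᵥ z) + β₀ ⬝ᵥ x)) :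
    β₁ = β₀ ∧ (∀ t ∈ Icc (0:ℝ) τ, w₁ t = w₀ t) ∧ (∀ u : ℝ, m₁ u = m₀ u) := by

  have hHinj : Function.Injective H := hH.elim (fun h => h.injective) (fun h => h.injective)
  have core : ∀ z x, ∀ t ∈ Icc (0:ℝ) τ,
      m₁ (w₁ t ⬝ᵥ z) + β₁ ⬝ᵥ x = m₀ (w₀ t ⬝ᵥ z) + β₀ ⬝ᵥ x :=
    fun z x t ht => hHinj (heq z x t ht)
  have h0 : (0:ℝ) ∈ Icc (0:ℝ) τ := ⟨le_refl 0, hτ.le⟩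
  have hβ : β₁ = β₀ := by
    funext j
    have h := core 0 (Pi.single j 1) 0 h0
    simp [dotProduct_zero, dotProduct_single, hm₀0, hm₁0] at h
    linarith
  have hm : ∀ u : ℝ, m₁ u = m₀ u := by
    intro u
    have h := core (fun _ => u) 0 0 h0
    have e₁ : w₁ 0 ⬝ᵥ (fun _ => u) = u := by
      have : ∑ j, w₁ 0 j = 1 := by
        rw [← hw₁norm 0 h0]
        exact Finset.sum_congr rfl fun j _ => (abs_of_pos (hw₁pos 0 h0 j)).symm
      simp only [dotProduct]
      rw [← Finset.sum_mul, this, one_mul]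
    have e₀ : w₀ 0 ⬝ᵥ (fun _ => u) = u := by
      have : ∑ j, w₀ 0 j = 1 := by
        rw [← hw₀norm 0 h0]
        exact Finset.sum_congr rfl fun j _ => (abs_of_pos (hw₀pos 0 h0 j)).symm
      simp only [dotProduct]
      rw [← Finset.sum_mul, this, one_mul]
    simpa [e₀, e₁] using h
  refine ⟨hβ, ?_, hm⟩
  intro t ht
  funext j
  have h := core (Pi.single j 1) 0 t ht
  simp only [dotProduct_zero, dotProduct_single, mul_one, add_zero] at h
  rw [hm] at h
  exact hm₀inj h
end

section
/- Let d ≥ 1, let a, b ∈ ℝ^d with b ≠ 0, and let m₀, m₁ : ℝ → ℝ with m₀ injective. If m₁(aᵀz) = m₀(bᵀz) for every z ∈ ℝ^d, then a ≠ 0 and there exists a nonzero constant c ∈ ℝ such that a = c · b. -/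
open Matrix Module

theorem LinearMap.ker_le_ker_of_comp_eq_comp {R M N P : Type*} [Semiring R]
    [AddCommMonoid M] [AddCommMonoid N] [Module R M] [Module R N] {f g : M →ₗ[R] N}
    {m₀ m₁ : N → P} (hm₀ : Function.Injective m₀) (h : ∀ z, m₁ (f z) = m₀ (g z)) :
    LinearMap.ker f ≤ LinearMap.ker g := by
  intro z hz
  rw [LinearMap.mem_ker] at hz ⊢
  apply hm₀
  rw [← map_zero g, ← h, ← h, hz, map_zero]

theorem Module.Dual.exists_eq_smul_of_ker_le {K V : Type*} [Field K] [AddCommGroup V]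
    [Module K V] {f g : Dual K V} (h : LinearMap.ker f ≤ LinearMap.ker g) :
    ∃ c : K, g = c • f := by
  have hspan : g ∈ Submodule.span K (Set.range fun _ : Unit => f) :=
    mem_span_of_iInf_ker_le_ker (by simpa using h)
  rw [Set.range_const, Submodule.mem_span_singleton] at hspan
  obtain ⟨c, hc⟩ := hspan
  exact ⟨c, hc.symm⟩

theorem single_index_vectors_parallel_general
    (d : ℕ) (a b : Fin d → ℝ) (hb : b ≠ 0)
    (m₀ m₁ : ℝ → ℝ) (hm₀inj : Function.Injective m₀)
    (heq : ∀ z : Fin d → ℝ, m₁ (a ⬝ᵥ z) = m₀ (b ⬝ᵥ z)) :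
    a ≠ 0 ∧ ∃ c : ℝ, c ≠ 0 ∧ a = c • b := by
  let e := dotProductEquiv ℝ (Fin d)
  obtain ⟨c, hc⟩ := Dual.exists_eq_smul_of_ker_le
    (LinearMap.ker_le_ker_of_comp_eq_comp (f := e a) (g := e b) hm₀inj heq)
  have hba : b = c • a := e.injective (by rw [hc, map_smul])
  have hc0 : c ≠ 0 := by
    rintro rfl
    exact hb (by rw [hba, zero_smul])
  refine ⟨fun ha => hb (by rw [hba, ha, smul_zero]), c⁻¹, inv_ne_zero hc0, ?_⟩
  rw [hba, inv_smul_smul₀ hc0]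

/-- Intermediate step in the proof of Proposition 1: two single-index
representations with an injective outer function force the index vectors
to be parallel. -/
theorem single_index_vectors_parallel
    (d : ℕ) (hd : 1 ≤ d) (a b : Fin d → ℝ) (hb : b ≠ 0)
    (m₀ m₁ : ℝ → ℝ) (hm₀inj : Function.Injective m₀)
    (heq : ∀ z : Fin d → ℝ, m₁ (a ⬝ᵥ z) = m₀ (b ⬝ᵥ z)) :
    a ≠ 0 ∧ ∃ c : ℝ, c ≠ 0 ∧ a = c • b :=
  single_index_vectors_parallel_general d a b hb m₀ m₁ hm₀inj heq
end

section
/- Let d ≥ 1, let m₀, m₁ : ℝ → ℝ with m₀ injective, and let a, b ∈ ℝ^d be such that every component of a and of b is strictly positive and ∑ⱼ aⱼ = ∑ⱼ bⱼ = 1. If m₁(aᵀz) = m₀(bᵀz) for every z ∈ ℝ^d, then a = b and m₁(u) = m₀(u) for every u ∈ ℝ. -/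
open Matrix

/-- Single-index identifiability at a fixed time point: with index vectors
constrained to have positive components summing to one, the weight vector
and the injective link function are uniquely determined. -/
theorem single_index_identifiability
    (d : ℕ) (hd : 1 ≤ d) (m₀ m₁ : ℝ → ℝ) (hm₀inj : Function.Injective m₀)
    (a b : Fin d → ℝ)
    (ha : ∀ j, 0 < a j) (hb : ∀ j, 0 < b j)
    (hsa : ∑ j, a j = 1) (hsb : ∑ j, b j = 1)
    (heq : ∀ z : Fin d → ℝ, m₁ (a ⬝ᵥ z) = m₀ (b ⬝ᵥ z)) :
    a = b ∧ ∀ u : ℝ, m₁ u = m₀ u := by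
  have hfun : ∀ u : ℝ, m₁ u = m₀ u := by
    intro u
    have h := heq (fun _ => u)
    have hav : a ⬝ᵥ (fun _ => u) = u := by
      simp [dotProduct, ← Finset.sum_mul, hsa]
    have hbv : b ⬝ᵥ (fun _ => u) = u := by
      simp [dotProduct, ← Finset.sum_mul, hsb]
    rwa [hav, hbv] at h
  refine ⟨?_, hfun⟩
  funext j
  have h := heq (Pi.single j 1)
  rw [hfun] at h
  have := hm₀inj h
  simpa [dotProduct, Pi.single_apply, mul_comm] using this
end
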